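/- Let V be a regular (completely unimodular) subspace of ℝ^S for a finite set S, let B ⊆ S be a base of V, and let (x_e)_{e∈B} be the standard representative vectors of V with respect to B. Then every x_e takes values only in {0, 1, −1}. -/

import Mathlib

/-- The support of a vector on `S`: the set of coordinates where it is nonzero. -/
def suppOf {S : Type*} (x : S → ℝ) : Set S := {e | x e ≠ 0}

/-- A nonzero vector `x` of a subspace `V` of `ℝ^S` has minimal support in `V`
if no nonzero vector of `V` has support properly contained in `suppOf x`. -/
def HasMinimalSupport {S : Type*} (V : Submodule ℝ (S → ℝ)) (x : S → ℝ) : Prop :=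
  x ≠ 0 ∧ ∀ y ∈ V, y ≠ 0 → ¬ (suppOf y ⊂ suppOf x)

/-- A subspace `V` of `ℝ^S` is regular (completely unimodular) if every minimal
support vector of `V` is a scalar multiple of a vector with values in `{0, 1, -1}`. -/
def IsRegularSubspace {S : Type*} (V : Submodule ℝ (S → ℝ)) : Prop :=
  ∀ x ∈ V, HasMinimalSupport V x →
    ∃ (c : ℝ) (u : S → ℝ), (∀ e, u e = 0 ∨ u e = 1 ∨ u e = -1) ∧ x = c • u

/-- A subset `B ⊆ S` is a base of the subspace `V ⊆ ℝ^S` if the restriction map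
`V → ℝ^B`, `x ↦ x|_B`, is a (linear) isomorphism, i.e. bijective. -/
def IsBase {S : Type*} (V : Submodule ℝ (S → ℝ)) (B : Set S) : Prop :=
  Function.Bijective (fun (x : V) => fun (e : B) => (x : S → ℝ) e)

/-!
A standard representative vector `x_e` has minimal support: a vector of `V` whose support lies
inside that of `x_e` vanishes on `B \ {e}`, so it agrees on the base `B` with a multiple of `x_e`
and hence is that multiple. Regularity then writes `x_e = c • u` with `u` a `{0, 1, -1}`-vector,
and `x_e e = 1` forces `c = ±1`.
-/

section

variable {S : Type*}

lemma suppOf_smul {c : ℝ} (hc : c ≠ 0) (x : S → ℝ) : suppOf (c • x) = suppOf x := by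
  ext s
  simp [suppOf, hc]

lemma IsBase.eq_of_forall_mem_eq {V : Submodule ℝ (S → ℝ)} {B : Set S} (hB : IsBase V B)
    {x y : S → ℝ} (hx : x ∈ V) (hy : y ∈ V) (hxy : ∀ b ∈ B, x b = y b) : x = y :=
  congrArg Subtype.val (hB.injective (a₁ := ⟨x, hx⟩) (a₂ := ⟨y, hy⟩) (funext fun b => hxy b b.2))

lemma IsBase.hasMinimalSupport {V : Submodule ℝ (S → ℝ)} {B : Set S} (hB : IsBase V B)
    {e : S} {xe : S → ℝ} (hxV : xe ∈ V) (hxe : xe e = 1)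
    (hx0 : ∀ e' ∈ B, e' ≠ e → xe e' = 0) : HasMinimalSupport V xe := by
  refine ⟨fun h => by simp [h] at hxe, fun y hyV hy0 hsub => ?_⟩
  have hy : y = y e • xe := by
    refine hB.eq_of_forall_mem_eq hyV (V.smul_mem _ hxV) fun b hb => ?_
    by_cases hbe : b = e
    · simp [hbe, hxe]
    · have hyb : y b = 0 := by_contra fun h => hsub.1 h (hx0 b hb hbe)
      simp [hyb, hx0 b hb hbe]
  have hye : y e ≠ 0 := fun h => hy0 (by rw [hy, h, zero_smul])
  have hsupp : suppOf y = suppOf xe := by rw [hy, suppOf_smul hye]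
  exact hsub.ne hsupp

lemma smul_signVector_of_apply_eq_one {u : S → ℝ} (hu : ∀ e, u e = 0 ∨ u e = 1 ∨ u e = -1)
    {c : ℝ} {e : S} (h : (c • u) e = 1) (e' : S) :
    (c • u) e' = 0 ∨ (c • u) e' = 1 ∨ (c • u) e' = -1 := by
  have hc : c = 1 ∨ c = -1 := by
    rcases hu e with hue | hue | hue <;> simp [hue] at h
    exacts [.inl h, .inr (neg_eq_iff_eq_neg.mp h)]
  rcases hc with rfl | rfl <;> rcases hu e' with h' | h' | h' <;> simp [h']

end

theorem standardRepresentative_values_of_regular_general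
    {S : Type*} (V : Submodule ℝ (S → ℝ)) (hV : IsRegularSubspace V)
    (B : Set S) (hB : IsBase V B)
    (e : S) (xe : S → ℝ) (hxV : xe ∈ V) (hxe : xe e = 1)
    (hx0 : ∀ e' ∈ B, e' ≠ e → xe e' = 0) :
    ∀ e' : S, xe e' = 0 ∨ xe e' = 1 ∨ xe e' = -1 := by
  obtain ⟨c, u, hu, rfl⟩ := hV xe hxV (hB.hasMinimalSupport hxV hxe hx0)
  exact smul_signVector_of_apply_eq_one hu hxe

/-- If `V` is regular, then every standard representative vector of `V` with
respect to a base `B` takes values only in `{0, 1, -1}`. -/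
theorem standardRepresentative_values_of_regular
    {S : Type*} [Fintype S] (V : Submodule ℝ (S → ℝ)) (hV : IsRegularSubspace V)
    (B : Set S) (hB : IsBase V B)
    (e : S) (he : e ∈ B) (xe : S → ℝ) (hxV : xe ∈ V) (hxe : xe e = 1)
    (hx0 : ∀ e' ∈ B, e' ≠ e → xe e' = 0) :
    ∀ e' : S, xe e' = 0 ∨ xe e' = 1 ∨ xe e' = -1 :=
  standardRepresentative_values_of_regular_general V hV B hB e xe hxV hxe hx0
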